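/- arXiv:2204.00169 — 4 statements merged into one kernel-verified Lean document; each statement's English description precedes it below -/
import Mathlib

section
/- For every integer n ≥ 3, the Talenti function Q(y) = (1 + |y|²/(n(n−2)))^{−(n−2)/2} is a smooth, strictly positive, radially symmetric function on ℝⁿ satisfying ΔQ(y) + Q(y)^p = 0 for every y ∈ ℝⁿ, where p = (n+2)/(n−2). -/
/-!
A radial function `y ↦ φ (‖y‖²)` on `ℝⁿ` has Laplacian `2n φ'(r) + 4r φ''(r)` at `r = ‖y‖²`.
For `φ(r) = A(r)^{-(n-2)/2}` with `A(r) = 1 + r/(n(n-2))` one gets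
`2n φ' = -A^{-n/2}` and `4r φ'' = (r/(n(n-2))) A^{-(n+2)/2}`, while `φ^p = A^{-(n+2)/2}`;
the three terms add up to `A^{-(n+2)/2} (1 + r/(n(n-2)) - A) = 0`.
-/

noncomputable def laplacian {n : ℕ} (f : EuclideanSpace ℝ (Fin n) → ℝ)
    (x : EuclideanSpace ℝ (Fin n)) : ℝ :=
  ∑ i : Fin n,
    fderiv ℝ (fun y => fderiv ℝ f y (EuclideanSpace.single i 1)) x (EuclideanSpace.single i 1)

open scoped RealInnerProductSpace

section Radial

variable {E : Type*} [NormedAddCommGroup E] [InnerProductSpace ℝ E] {φ φ' : ℝ → ℝ}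

theorem HasDerivAt.hasFDerivAt_comp_norm_sq {d : ℝ} {x : E} (hφ : HasDerivAt φ d (‖x‖ ^ 2)) :
    HasFDerivAt (fun y : E => φ (‖y‖ ^ 2)) (d • (2 • innerSL ℝ x)) x :=
  hφ.comp_hasFDerivAt x (hasStrictFDerivAt_norm_sq x).hasFDerivAt

theorem fderiv_comp_norm_sq_apply (hφ : ∀ s, 0 ≤ s → HasDerivAt φ (φ' s) s) (y v : E) :
    fderiv ℝ (fun y : E => φ (‖y‖ ^ 2)) y v = φ' (‖y‖ ^ 2) * (2 * ⟪y, v⟫) := by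
  rw [(hφ _ (sq_nonneg _)).hasFDerivAt_comp_norm_sq.fderiv]
  simp

theorem fderiv_fderiv_comp_norm_sq_apply (hφ : ∀ s, 0 ≤ s → HasDerivAt φ (φ' s) s) {φ'' : ℝ}
    {x : E} (hφ' : HasDerivAt φ' φ'' (‖x‖ ^ 2)) (v : E) :
    fderiv ℝ (fun y => fderiv ℝ (fun y : E => φ (‖y‖ ^ 2)) y v) x v
      = 4 * φ'' * ⟪x, v⟫ ^ 2 + 2 * φ' (‖x‖ ^ 2) * ‖v‖ ^ 2 := by
  simp_rw [fderiv_comp_norm_sq_apply hφ _ v]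
  have hinner : HasFDerivAt (fun y : E => 2 * ⟪y, v⟫) ((2 : ℝ) • innerSL ℝ v) x := by
    simpa [real_inner_comm] using ((innerSL ℝ v).hasFDerivAt (x := x)).const_mul 2
  rw [(hφ'.hasFDerivAt_comp_norm_sq.fun_mul hinner).fderiv]
  simp
  ring

end Radial

theorem laplacian_comp_norm_sq {n : ℕ} {φ φ' : ℝ → ℝ} (hφ : ∀ s, 0 ≤ s → HasDerivAt φ (φ' s) s)
    {φ'' : ℝ} {x : EuclideanSpace ℝ (Fin n)} (hφ' : HasDerivAt φ' φ'' (‖x‖ ^ 2)) :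
    laplacian (fun y => φ (‖y‖ ^ 2)) x = 2 * n * φ' (‖x‖ ^ 2) + 4 * ‖x‖ ^ 2 * φ'' := by
  simp only [laplacian, fderiv_fderiv_comp_norm_sq_apply hφ hφ', EuclideanSpace.inner_single_right,
    PiLp.norm_single, norm_one, one_pow, mul_one]
  rw [Finset.sum_add_distrib, ← Finset.mul_sum, EuclideanSpace.real_norm_sq_eq]
  simp only [Real.ringHom_apply, one_mul, Finset.sum_const, Finset.card_univ, Fintype.card_fin,
    nsmul_eq_mul]
  ring

theorem hasDerivAt_one_add_div_rpow {c t : ℝ} (β : ℝ) (ht : 0 < 1 + t / c) :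
    HasDerivAt (fun s => (1 + s / c) ^ β) (β / c * (1 + t / c) ^ (β - 1)) t := by
  refine ((((hasDerivAt_id' t).div_const c).const_add 1).rpow_const (Or.inl ht.ne')).congr_deriv ?_
  ring

section Talenti

variable {n t : ℝ}

noncomputable def talentiProfile (n t : ℝ) : ℝ := (1 + t / (n * (n - 2))) ^ (-((n - 2) / 2))

noncomputable def talentiProfileDeriv (n t : ℝ) : ℝ :=
  -(2 * n)⁻¹ * (1 + t / (n * (n - 2))) ^ (-(n / 2))

theorem one_add_div_mul_sub_two_pos (hn : 2 < n) (ht : 0 ≤ t) : 0 < 1 + t / (n * (n - 2)) := by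
  have : 0 ≤ t / (n * (n - 2)) := div_nonneg ht (mul_pos (by linarith) (by linarith)).le
  linarith

theorem talentiProfile_pos (hn : 2 < n) (ht : 0 ≤ t) : 0 < talentiProfile n t :=
  Real.rpow_pos_of_pos (one_add_div_mul_sub_two_pos hn ht) _

theorem hasDerivAt_talentiProfile (hn : 2 < n) (ht : 0 ≤ t) :
    HasDerivAt (talentiProfile n) (talentiProfileDeriv n t) t := by
  refine (hasDerivAt_one_add_div_rpow _ (one_add_div_mul_sub_two_pos hn ht)).congr_deriv ?_
  have hn0 : n ≠ 0 := by linarith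
  have hn2 : n - 2 ≠ 0 := by linarith
  rw [talentiProfileDeriv, show -((n - 2) / 2) - 1 = -(n / 2) by ring]
  field_simp

theorem hasDerivAt_talentiProfileDeriv (hn : 2 < n) (ht : 0 ≤ t) :
    HasDerivAt (talentiProfileDeriv n)
      ((4 * n * (n - 2))⁻¹ * (1 + t / (n * (n - 2))) ^ (-((n + 2) / 2))) t := by
  refine ((hasDerivAt_one_add_div_rpow _ (one_add_div_mul_sub_two_pos hn ht)).const_mul
    (-(2 * n)⁻¹)).congr_deriv ?_
  have hn0 : n ≠ 0 := by linarith
  have hn2 : n - 2 ≠ 0 := by linarith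
  rw [show -(n / 2) - 1 = -((n + 2) / 2) by ring]
  field_simp
  ring

theorem talentiProfile_radial_equation (hn : 2 < n) (ht : 0 ≤ t) :
    2 * n * talentiProfileDeriv n t
      + 4 * t * ((4 * n * (n - 2))⁻¹ * (1 + t / (n * (n - 2))) ^ (-((n + 2) / 2)))
      + talentiProfile n t ^ ((n + 2) / (n - 2)) = 0 := by
  have hn0 : n ≠ 0 := by linarith
  have hn2 : n - 2 ≠ 0 := by linarith
  have hA := one_add_div_mul_sub_two_pos hn ht
  rw [talentiProfile, talentiProfileDeriv, ← Real.rpow_mul hA.le]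
  set A := 1 + t / (n * (n - 2)) with hA_def
  have hexp : -((n - 2) / 2) * ((n + 2) / (n - 2)) = -((n + 2) / 2) := by
    field_simp
  have hshift : A ^ (-(n / 2)) = A ^ (-((n + 2) / 2)) * A := by
    rw [← Real.rpow_add_one hA.ne']
    ring_nf
  rw [hexp, hshift, hA_def]
  field_simp
  ring

theorem contDiff_talentiProfile_comp_norm_sq {E : Type*} [NormedAddCommGroup E]
    [InnerProductSpace ℝ E] {k : WithTop ℕ∞} (hn : 2 < n) :
    ContDiff ℝ k (fun y : E => talentiProfile n (‖y‖ ^ 2)) :=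
  (contDiff_const.add (contDiff_norm_sq ℝ |>.div_const _)).rpow_const_of_ne
    fun _ => (one_add_div_mul_sub_two_pos hn (sq_nonneg _)).ne'

end Talenti

/-- For every integer `n ≥ 3`, the Talenti function
`Q(y) = (1 + |y|²/(n(n−2)))^{−(n−2)/2}` is a smooth, strictly positive, radially
symmetric function on `ℝⁿ` satisfying `ΔQ(y) + Q(y)^p = 0` for every `y`, where
`p = (n+2)/(n−2)`. -/
theorem talenti_function_properties (n : ℕ) (hn : 3 ≤ n) (p : ℝ)
    (hp : p = ((n : ℝ) + 2) / ((n : ℝ) - 2))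
    (Q : EuclideanSpace ℝ (Fin n) → ℝ)
    (hQ : ∀ y, Q y = (1 + ‖y‖ ^ 2 / ((n : ℝ) * ((n : ℝ) - 2))) ^ (-(((n : ℝ) - 2) / 2))) :
    ContDiff ℝ (⊤ : ℕ∞) Q ∧
    (∀ y, 0 < Q y) ∧
    (∀ y z, ‖y‖ = ‖z‖ → Q y = Q z) ∧
    (∀ y, laplacian Q y + Q y ^ p = 0) := by
  have h2n : (2 : ℝ) < n := by exact_mod_cast hn
  obtain rfl : Q = fun y => talentiProfile n (‖y‖ ^ 2) := funext hQ
  refine ⟨contDiff_talentiProfile_comp_norm_sq h2n, fun y => talentiProfile_pos h2n (sq_nonneg _),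
    fun y z h => by simp only [h], fun y => ?_⟩
  rw [laplacian_comp_norm_sq (fun s hs => hasDerivAt_talentiProfile h2n hs)
    (hasDerivAt_talentiProfileDeriv h2n (sq_nonneg _)), hp]
  exact talentiProfile_radial_equation h2n (sq_nonneg _)
end

section
/- Let n ≥ 5 be an integer, p = (n+2)/(n−2), and Q(y) = (1 + |y|²/(n(n−2)))^{−(n−2)/2}. There exists a constant m₁ > 1, depending only on n, such that for every y ∈ ℝⁿ with |y| > m₁: (i) −Δ(|y|^{−2}) − pQ(y)^{p−1}|y|^{−2} > (n−4)|y|^{−4}, and (ii) −Δ(|y|^{−(n−4)}) − pQ(y)^{p−1}|y|^{−(n−4)} > (n−4)|y|^{−(n−2)}. -/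
/-!
Away from the origin `Δ|y|^a = a(a+n-2)|y|^(a-2)`, and `a = -2`, `a = -(n-4)` are the two roots
of `a(a+n-2) = -2(n-4)`, so in both cases `-Δ|y|^a = 2(n-4)|y|^(a-2)`. Since `p - 1 = 4/(n-2)`,
the potential is `pQ^(p-1) = p(1 + |y|²/(n(n-2)))^(-2) ≤ p n²(n-2)² |y|^(-4)`, which is below
`(n-4)|y|^(-2)` once `|y|² > p n²(n-2)²/(n-4)`; the potential term then absorbs at most half of
the Laplacian term.
-/

section NormRpow

variable {E : Type*} [NormedAddCommGroup E] [InnerProductSpace ℝ E]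

theorem hasFDerivAt_norm_rpow_of_ne_zero (a : ℝ) {x : E} (hx : x ≠ 0) :
    HasFDerivAt (fun z : E ↦ ‖z‖ ^ a) ((a * ‖x‖ ^ (a - 2)) • innerSL ℝ x) x := by
  convert! ((hasStrictFDerivAt_norm_sq x).rpow_const (p := a / 2) (by simp [hx])).hasFDerivAt
    using 0
  simp_rw [← Real.rpow_natCast_mul (norm_nonneg _), ← Nat.cast_smul_eq_nsmul ℝ, smul_smul]
  ring_nf

theorem fderiv_fderiv_norm_rpow_apply (a : ℝ) {y : E} (hy : y ≠ 0) (v : E) :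
    fderiv ℝ (fun z ↦ fderiv ℝ (fun x : E ↦ ‖x‖ ^ a) z v) y v
      = a * ‖y‖ ^ (a - 2) * ‖v‖ ^ 2 + a * (a - 2) * ‖y‖ ^ (a - 4) * inner ℝ y v ^ 2 := by
  have hfirst : (fun z ↦ fderiv ℝ (fun x : E ↦ ‖x‖ ^ a) z v)
      =ᶠ[nhds y] fun z ↦ a * ‖z‖ ^ (a - 2) * inner ℝ z v := by
    filter_upwards [eventually_ne_nhds hy] with z hz
    simp [(hasFDerivAt_norm_rpow_of_ne_zero a hz).fderiv, mul_assoc]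
  have hsecond : HasFDerivAt (fun z ↦ a * ‖z‖ ^ (a - 2) * inner ℝ z v) _ y :=
    ((hasFDerivAt_norm_rpow_of_ne_zero (a - 2) hy).const_mul a).mul
      ((innerSL ℝ v).hasFDerivAt.congr_of_eventuallyEq
        (Filter.Eventually.of_forall fun z ↦ real_inner_comm v z))
  rw [hfirst.fderiv_eq, hsecond.fderiv]
  simp only [add_apply, smul_apply, coe_innerSL_apply, inner_self_eq_norm_sq_to_K,
    Real.ringHom_apply, smul_eq_mul]
  ring_nf

end NormRpow

theorem laplacian_norm_rpow {n : ℕ} (a : ℝ) {y : EuclideanSpace ℝ (Fin n)} (hy : y ≠ 0) :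
    laplacian (fun x ↦ ‖x‖ ^ a) y = a * (a + n - 2) * ‖y‖ ^ (a - 2) := by
  have hsum : ∑ i : Fin n, y i ^ 2 = ‖y‖ ^ 2 := by
    rw [EuclideanSpace.norm_eq, Real.sq_sqrt (by positivity)]
    simp
  have hpow : ‖y‖ ^ (a - 4) * ‖y‖ ^ 2 = ‖y‖ ^ (a - 2) := by
    rw [← Real.rpow_natCast, ← Real.rpow_add (norm_pos_iff.mpr hy)]
    ring_nf
  simp only [laplacian, fderiv_fderiv_norm_rpow_apply a hy, PiLp.norm_single,
    EuclideanSpace.inner_single_right, norm_one, one_pow, mul_one, Real.ringHom_apply, one_mul,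
    Finset.sum_add_distrib, Finset.sum_const, Finset.card_univ, Fintype.card_fin, nsmul_eq_mul,
    ← Finset.mul_sum, hsum]
  linear_combination a * (a - 2) * hpow

theorem rpow_neg_half_rpow_critical_sub_one {n t : ℝ} (hn : n ≠ 2) (ht : 0 ≤ t) :
    (t ^ (-((n - 2) / 2))) ^ ((n + 2) / (n - 2) - 1) = t ^ (-2 : ℝ) := by
  rw [← Real.rpow_mul ht]
  congr 1
  have : n - 2 ≠ 0 := sub_ne_zero.mpr hn
  field_simp
  ring

theorem mul_one_add_sq_div_rpow_neg_two_lt {p k c r : ℝ} (hp : 0 ≤ p) (hc : 0 < c) (hr : 0 < r)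
    (h : p * c ^ 2 < k * r ^ 2) :
    p * (1 + r ^ 2 / c) ^ (-2 : ℝ) < k * r ^ (-2 : ℝ) := by
  have ht : 0 < 1 + r ^ 2 / c := by positivity
  rw [Real.rpow_neg ht.le, Real.rpow_neg hr.le, Real.rpow_two, Real.rpow_two, ← div_eq_mul_inv,
    ← div_eq_mul_inv, div_lt_div_iff₀ (by positivity) (by positivity)]
  have hk : 0 < k := pos_of_mul_pos_left ((by positivity : 0 ≤ p * c ^ 2).trans_lt h) (sq_nonneg r)
  calc p * r ^ 2 = p * c ^ 2 * r ^ 2 / c ^ 2 := by field_simp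
    _ < k * r ^ 2 * r ^ 2 / c ^ 2 := by gcongr
    _ = k * (r ^ 2 / c) ^ 2 := by ring
    _ ≤ k * (1 + r ^ 2 / c) ^ 2 := by gcongr; linarith

theorem lt_neg_laplacian_norm_rpow_sub_mul {n : ℕ} {a k V : ℝ} {y : EuclideanSpace ℝ (Fin n)}
    (hy : y ≠ 0) (ha : a * (a + n - 2) = -2 * k) (hV : V < k * ‖y‖ ^ (-2 : ℝ)) :
    k * ‖y‖ ^ (a - 2) < -laplacian (fun x ↦ ‖x‖ ^ a) y - V * ‖y‖ ^ a := by
  have hy' : 0 < ‖y‖ := norm_pos_iff.mpr hy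
  have hsplit : ‖y‖ ^ (a - 2) = ‖y‖ ^ (-2 : ℝ) * ‖y‖ ^ a := by
    rw [← Real.rpow_add hy']
    ring_nf
  have hVa : V * ‖y‖ ^ a < k * ‖y‖ ^ (a - 2) := by
    rw [hsplit, ← mul_assoc]
    exact mul_lt_mul_of_pos_right hV (by positivity)
  rw [laplacian_norm_rpow a hy, ha]
  linarith

/-- For `n ≥ 5` there is a constant `m₁ > 1`, depending only on `n`,
such that for `|y| > m₁`:
(i) `−Δ(|y|^{−2}) − pQ(y)^{p−1}|y|^{−2} > (n−4)|y|^{−4}`, and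
(ii) `−Δ(|y|^{−(n−4)}) − pQ(y)^{p−1}|y|^{−(n−4)} > (n−4)|y|^{−(n−2)}`,
where `p = (n+2)/(n−2)` and `Q` is the Talenti function. -/
theorem comparison_function_constant (n : ℕ) (hn : 5 ≤ n) (p : ℝ)
    (hp : p = ((n : ℝ) + 2) / ((n : ℝ) - 2))
    (Q : EuclideanSpace ℝ (Fin n) → ℝ)
    (hQ : ∀ y, Q y = (1 + ‖y‖ ^ 2 / ((n : ℝ) * ((n : ℝ) - 2))) ^ (-(((n : ℝ) - 2) / 2))) :
    ∃ m₁ : ℝ, 1 < m₁ ∧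
      ∀ y : EuclideanSpace ℝ (Fin n), m₁ < ‖y‖ →
        (-laplacian (fun x => ‖x‖ ^ (-2 : ℝ)) y - p * Q y ^ (p - 1) * ‖y‖ ^ (-2 : ℝ)
            > ((n : ℝ) - 4) * ‖y‖ ^ (-4 : ℝ)) ∧
        (-laplacian (fun x => ‖x‖ ^ (-((n : ℝ) - 4))) y
            - p * Q y ^ (p - 1) * ‖y‖ ^ (-((n : ℝ) - 4))
            > ((n : ℝ) - 4) * ‖y‖ ^ (-((n : ℝ) - 2))) := by
  have hn5 : (5 : ℝ) ≤ n := by exact_mod_cast hn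
  set c : ℝ := n * (n - 2)
  have hc : 0 < c := mul_pos (by linarith) (by linarith)
  have hp0 : 0 < p := by rw [hp]; exact div_pos (by linarith) (by linarith)
  have hm : 0 < p * c ^ 2 / (n - 4) := div_pos (by positivity) (by linarith)
  refine ⟨1 + p * c ^ 2 / (n - 4), by linarith, fun y hy ↦ ?_⟩
  have hy1 : 1 < ‖y‖ := by linarith
  have hy0 : y ≠ 0 := norm_pos_iff.mp (by linarith)
  have hV : p * Q y ^ (p - 1) < (n - 4) * ‖y‖ ^ (-2 : ℝ) := by
    have hQp : Q y ^ (p - 1) = (1 + ‖y‖ ^ 2 / c) ^ (-2 : ℝ) := by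
      rw [hQ, hp, rpow_neg_half_rpow_critical_sub_one (by linarith) (by positivity)]
    rw [hQp]
    refine mul_one_add_sq_div_rpow_neg_two_lt hp0.le hc (by linarith) ?_
    rw [← div_lt_iff₀' (by linarith)]
    nlinarith
  refine ⟨?_, ?_⟩
  · have := lt_neg_laplacian_norm_rpow_sub_mul (a := -2) hy0 (by ring) hV
    rwa [show (-2 : ℝ) - 2 = -4 by norm_num] at this
  · have := lt_neg_laplacian_norm_rpow_sub_mul (a := -((n : ℝ) - 4)) hy0 (by ring) hV
    rwa [show -((n : ℝ) - 4) - 2 = -(n - 2) by ring] at this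
end

section
/- Let p > 1 and q ∈ (0,1), and let A ∈ (0,1). Set T* = A^{1−q}/( (1−q)(1 − A^{p−q}) ). If v : [0,T*] → ℝ is differentiable with v(0) = A, 0 ≤ v(t) ≤ A for all t ∈ [0,T*], and v′(t) = v(t)^p − v(t)^q for all t ∈ [0,T*], then there exists t₀ ∈ [0,T*] with v(t₀) = 0. (Finite-time extinction for the spatially homogeneous equation u_t = |u|^{p−1}u − |u|^{q−1}u below the threshold 1.) -/
/-- Finite-time extinction for the ODE `v′ = v^p − v^q` below threshold.
Let `p > 1`, `q ∈ (0,1)`, `A ∈ (0,1)` and `T* = A^{1−q}/((1−q)(1 − A^{p−q}))`. If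
`v : [0,T*] → ℝ` is differentiable with `v(0) = A`, `0 ≤ v ≤ A` on `[0,T*]` and
`v′(t) = v(t)^p − v(t)^q` on `[0,T*]`, then `v` vanishes somewhere on `[0,T*]`. -/
theorem ode_finite_time_extinction (p q A : ℝ)
    (hp : 1 < p) (hq0 : 0 < q) (hq1 : q < 1) (hA0 : 0 < A) (hA1 : A < 1)
    (Tstar : ℝ) (hT : Tstar = A ^ (1 - q) / ((1 - q) * (1 - A ^ (p - q))))
    (v : ℝ → ℝ)
    (hv0 : v 0 = A)
    (hvb : ∀ t ∈ Set.Icc (0 : ℝ) Tstar, 0 ≤ v t ∧ v t ≤ A)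
    (hv' : ∀ t ∈ Set.Icc (0 : ℝ) Tstar, HasDerivAt v (v t ^ p - v t ^ q) t) :
    ∃ t₀ ∈ Set.Icc (0 : ℝ) Tstar, v t₀ = 0 := by
  by_contra h
  push_neg at h
  have hpq : 0 < p - q := by linarith
  have hApq : A ^ (p - q) < 1 := Real.rpow_lt_one hA0.le hA1 hpq
  set c : ℝ := (1 - q) * (1 - A ^ (p - q)) with hc
  have hc0 : 0 < c := mul_pos (by linarith) (by linarith)
  have hA1q : 0 < A ^ (1 - q) := Real.rpow_pos_of_pos hA0 _
  have hT0 : 0 < Tstar := by rw [hT]; exact div_pos hA1q hc0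
  have hpos : ∀ t ∈ Set.Icc (0 : ℝ) Tstar, 0 < v t := fun t ht =>
    lt_of_le_of_ne (hvb t ht).1 (Ne.symm (h t ht))
  set g : ℝ → ℝ := fun t => v t ^ (1 - q) + c * t with hg
  have hgc : ContinuousOn g (Set.Icc 0 Tstar) := by
    apply ContinuousOn.add
    · exact ContinuousOn.rpow_const
        (fun t ht => (hv' t ht).continuousAt.continuousWithinAt)
        (fun t ht => Or.inl (hpos t ht).ne')
    · exact (continuous_const.mul continuous_id).continuousOn
  have hderiv : ∀ x ∈ Set.Ioo (0 : ℝ) Tstar, HasDerivAt g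
      ((v x ^ p - v x ^ q) * (1 - q) * v x ^ (1 - q - 1) + c * 1) x := by
    intro x hx
    have hx' : x ∈ Set.Icc (0 : ℝ) Tstar := Set.Ioo_subset_Icc_self hx
    exact ((hv' x hx').rpow_const (Or.inl (hpos x hx').ne')).add
      ((hasDerivAt_id x).const_mul c)
  have hanti : AntitoneOn g (Set.Icc 0 Tstar) := by
    apply antitoneOn_of_deriv_nonpos (convex_Icc 0 Tstar) hgc
    · intro x hx
      rw [interior_Icc] at hx
      exact ((hderiv x hx).differentiableAt.differentiableWithinAt)
    intro x hx
    rw [interior_Icc] at hx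
    have hx' : x ∈ Set.Icc (0 : ℝ) Tstar := Set.Ioo_subset_Icc_self hx
    have hvx : 0 < v x := hpos x hx'
    rw [(hderiv x hx).deriv]
    have e1 : v x ^ p * v x ^ (1 - q - 1) = v x ^ (p - q) := by
      rw [← Real.rpow_add hvx]; ring_nf
    have e2 : v x ^ q * v x ^ (1 - q - 1) = 1 := by
      rw [← Real.rpow_add hvx]
      norm_num
    have e3 : v x ^ (p - q) ≤ A ^ (p - q) :=
      Real.rpow_le_rpow (hvb x hx').1 (hvb x hx').2 hpq.le
    nlinarith [e3, e1, e2]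
  have h0 : (0 : ℝ) ∈ Set.Icc (0 : ℝ) Tstar := ⟨le_refl _, hT0.le⟩
  have hTm : Tstar ∈ Set.Icc (0 : ℝ) Tstar := ⟨hT0.le, le_refl _⟩
  have hgT : g Tstar ≤ g 0 := hanti h0 hTm hT0.le
  have hcT : c * Tstar = A ^ (1 - q) := by
    rw [hT]; field_simp
  have hvT : 0 < v Tstar ^ (1 - q) := Real.rpow_pos_of_pos (hpos Tstar hTm) _
  simp only [hg, hv0, mul_zero, add_zero] at hgT
  rw [hcT] at hgT
  linarith
end

section
/- Let n ≥ 1 be an integer, p > 1, q ∈ (0,1), and A ∈ (0,1). Suppose u : ℝⁿ × [0,∞) → ℝ is bounded and continuous, is C^{2,1} on ℝⁿ × (0,∞) (continuous time derivative and continuous spatial derivatives up to order two), satisfies ∂_t u = Δu + |u|^{p−1}u − |u|^{q−1}u on ℝⁿ × (0,∞), and |u(x,0)| ≤ A for all x ∈ ℝⁿ. Then there exists T > 0 such that u(x,t) = 0 for all x ∈ ℝⁿ and all t ≥ T (finite time extinction). -/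
open Filter Set Topology Real
open scoped Laplacian

variable {E : Type*} [NormedAddCommGroup E] [InnerProductSpace ℝ E] [FiniteDimensional ℝ E]

theorem IsLocalMax.deriv_deriv_nonpos {g g' : ℝ → ℝ} {a c : ℝ} (hmax : IsLocalMax g a)
    (hg : ∀ s, HasDerivAt g (g' s) s) (hg' : HasDerivAt g' c a) : c ≤ 0 := by
  -- If `c > 0`, the second derivative test makes `a` a local minimum too, so `g` is constant
  -- near `a` and `c = 0`.
  by_contra! hc
  have hderiv : deriv g = g' := funext fun s => (hg s).deriv
  have hmin : IsLocalMin g a :=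
    isLocalMin_of_deriv_deriv_pos (by rwa [hderiv, hg'.deriv])
      (by rw [hderiv, ← (hg a).deriv]; exact hmax.deriv_eq_zero) (hg a).continuousAt
  have hconst : ∀ᶠ s in 𝓝 a, g s = g a := (hmax.and hmin).mono fun s hs => le_antisymm hs.1 hs.2
  have hzero : g' =ᶠ[𝓝 a] fun _ => 0 := by
    filter_upwards [hconst.eventually_nhds] with s hs
    exact (hg s).unique ((hasDerivAt_const s (g a)).congr_of_eventuallyEq hs)
  exact hc.ne' (hg'.unique ((hasDerivAt_const a 0).congr_of_eventuallyEq hzero))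

theorem IsMaxOn.hasDerivAt_nonneg_of_Icc {g : ℝ → ℝ} {d a b t : ℝ} (hmax : IsMaxOn g (Icc a b) t)
    (hg : HasDerivAt g d t) (hat : a < t) (htb : t ≤ b) : 0 ≤ d := by
  have hcone : a - t ∈ posTangentConeAt (Icc a b) t :=
    sub_mem_posTangentConeAt_of_segment_subset
      ((convex_Icc a b).segment_subset ⟨hat.le, htb⟩ ⟨le_rfl, hat.le.trans htb⟩)
  have := hmax.localize.hasFDerivWithinAt_nonpos hg.hasFDerivAt.hasFDerivWithinAt hcone
  simp only [ContinuousLinearMap.toSpanSingleton_apply, smul_eq_mul] at this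
  nlinarith

theorem exists_isMaxOn_strip {F : Type*} [NormedAddCommGroup F] [ProperSpace F]
    {Ψ : F × ℝ → ℝ} {T C ε : ℝ} {p₁ : F × ℝ} (hε : 0 < ε)
    (hΨ : ContinuousOn Ψ (Prod.snd ⁻¹' Icc 0 T)) (hp₁ : p₁.2 ∈ Icc 0 T)
    (hbound : ∀ p : F × ℝ, p.2 ∈ Icc 0 T → Ψ p ≤ C - ε * ‖p.1‖ ^ 2) :
    ∃ p₀ ∈ Prod.snd ⁻¹' Icc 0 T, IsMaxOn Ψ (Prod.snd ⁻¹' Icc 0 T) p₀ := by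
  refine hΨ.exists_isMaxOn' (isClosed_Icc.preimage continuous_snd) hp₁ ?_
  have hK : IsCompact (Metric.closedBall (0 : F) ((|C| + |Ψ p₁|) / ε + 1) ×ˢ Icc (0 : ℝ) T) :=
    (isCompact_closedBall _ _).prod isCompact_Icc
  filter_upwards [mem_inf_of_left hK.compl_mem_cocompact, mem_inf_of_right (mem_principal_self _)]
    with p hpK hp
  have hR : (|C| + |Ψ p₁|) / ε + 1 < ‖p.1‖ := by
    by_contra! hR
    exact hpK ⟨by simpa using hR, hp⟩
  rw [div_add_one hε.ne', div_lt_iff₀ hε] at hR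
  have hnorm : ε * ‖p.1‖ ≤ ε * ‖p.1‖ ^ 2 := by
    gcongr; nlinarith [abs_nonneg C, abs_nonneg (Ψ p₁)]
  linarith [hbound p hp, neg_abs_le C, neg_abs_le (Ψ p₁), le_abs_self C]

theorem IsLocalMax.iteratedFDeriv_two_nonpos {F : Type*} [NormedAddCommGroup F] [NormedSpace ℝ F]
    {f : F → ℝ} {x : F} (hf : ContDiff ℝ 2 f) (hmax : IsLocalMax f x) (e : F) :
    iteratedFDeriv ℝ 2 f x ![e, e] ≤ 0 := by
  have hline : ∀ s : ℝ, HasDerivAt (fun s : ℝ => x + s • e) e s := fun s => by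
    simpa using ((hasDerivAt_id s).smul_const e).const_add x
  rw [iteratedFDeriv_two_apply]
  refine IsLocalMax.deriv_deriv_nonpos (g := fun s => f (x + s • e))
    (g' := fun s => fderiv ℝ f (x + s • e) e) (a := 0) ?_ (fun s => ?_) ?_
  · exact IsLocalMax.comp_continuous (by simpa using hmax) (hline 0).continuousAt
  · exact (hf.differentiable two_ne_zero _).hasFDerivAt.comp_hasDerivAt s (hline s)
  · have := ((hf.fderiv_right le_rfl).differentiable one_ne_zero _).hasFDerivAt.comp_hasDerivAt
      (0 : ℝ) (hline 0)
    simpa using this.clm_apply (hasDerivAt_const 0 e)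

theorem laplacian_nonpos_of_isLocalMax {f : E → ℝ} {x : E} (hf : ContDiff ℝ 2 f)
    (hmax : IsLocalMax f x) : Δ f x ≤ 0 := by
  rw [InnerProductSpace.laplacian_eq_iteratedFDeriv_stdOrthonormalBasis]
  exact Finset.sum_nonpos fun i _ => hmax.iteratedFDeriv_two_nonpos hf _

theorem laplacian_norm_sq (x : E) : Δ (fun y : E => ‖y‖ ^ 2) x = 2 * Module.finrank ℝ E := by
  have hfd : fderiv ℝ (fun y : E => ‖y‖ ^ 2) = ⇑(2 • innerSL ℝ (E := E)) := by
    funext y; exact (hasStrictFDerivAt_norm_sq y).hasFDerivAt.fderiv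
  rw [InnerProductSpace.laplacian_eq_iteratedFDeriv_stdOrthonormalBasis]
  simp only [iteratedFDeriv_two_apply]
  rw [hfd, ContinuousLinearMap.fderiv]
  have hterm : ∀ i, innerSL ℝ (stdOrthonormalBasis ℝ E i) (stdOrthonormalBasis ℝ E i) = 1 := by
    intro i
    rw [innerSL_apply_apply, real_inner_self_eq_norm_sq, OrthonormalBasis.norm_eq_one, one_pow]
  simp [hterm, mul_comm]

theorem laplacian_eq_innerProductSpace_laplacian {n : ℕ} {f : EuclideanSpace ℝ (Fin n) → ℝ}
    (hf : ContDiff ℝ 2 f) (x : EuclideanSpace ℝ (Fin n)) : laplacian f x = Δ f x := by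
  rw [InnerProductSpace.laplacian_eq_iteratedFDeriv_orthonormalBasis f
    (EuclideanSpace.basisFun _ ℝ)]
  refine Finset.sum_congr rfl fun i _ => ?_
  rw [iteratedFDeriv_two_apply, fderiv_clm_apply
    ((hf.fderiv_right le_rfl).differentiable one_ne_zero x) (differentiableAt_const _)]
  simp

theorem laplacian_le_of_isLocalMax_sub_norm_sq {f : E → ℝ} {x : E} {c : ℝ} (hf : ContDiff ℝ 2 f)
    (hmax : IsLocalMax (fun y => f y - c * ‖y‖ ^ 2) x) :
    Δ f x ≤ 2 * Module.finrank ℝ E * c := by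
  have hsq : ContDiff ℝ 2 (c • fun y : E => ‖y‖ ^ 2) := (contDiff_norm_sq ℝ).const_smul c
  have := laplacian_nonpos_of_isLocalMax (f := f - c • fun y : E => ‖y‖ ^ 2) (hf.sub hsq) hmax
  rw [hf.contDiffAt.laplacian_sub hsq.contDiffAt,
    InnerProductSpace.laplacian_smul c (contDiff_norm_sq ℝ).contDiffAt, laplacian_norm_sq] at this
  simp only [smul_eq_mul, tsub_le_iff_right, zero_add] at this
  linarith

section MaximumPrinciple

variable {z zt : E → ℝ → ℝ} {L M : ℝ}

theorem exists_isMaxOn_penalized {ε : ℝ} (hε : 0 < ε) (hbdd : ∀ x t, 0 ≤ t → z x t ≤ M)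
    (hcont : ContinuousOn (fun p : E × ℝ => z p.1 p.2) {p | 0 ≤ p.2}) {T : ℝ} (hT : 0 ≤ T) :
    ∃ p₀ ∈ Prod.snd ⁻¹' Icc 0 T, IsMaxOn (fun p : E × ℝ => exp (-L * p.2) * z p.1 p.2
      - ε * (‖p.1‖ ^ 2 + (2 * Module.finrank ℝ E + 1) * p.2)) (Prod.snd ⁻¹' Icc 0 T) p₀ := by
  refine exists_isMaxOn_strip (p₁ := (0, 0)) (C := exp (|L| * T) * |M|) hε ?_ ⟨le_rfl, hT⟩ ?_
  · refine ContinuousOn.sub (ContinuousOn.mul (by fun_prop) (hcont.mono fun p hp => hp.1)) ?_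
    fun_prop
  rintro ⟨y, s⟩ ⟨hs0, hsT⟩
  have hexp : exp (-L * s) ≤ exp (|L| * T) :=
    exp_le_exp.2 (by nlinarith [neg_abs_le L, abs_nonneg L])
  have hzM : exp (-L * s) * z y s ≤ exp (|L| * T) * |M| :=
    (mul_le_mul_of_nonneg_left ((hbdd y s hs0).trans (le_abs_self M)) (exp_pos _).le).trans
      (mul_le_mul_of_nonneg_right hexp (abs_nonneg M))
  have hpenalty : 0 ≤ ε * ((2 * Module.finrank ℝ E + 1) * s) := by positivity
  dsimp only
  linarith

theorem exp_mul_le_penalty_of_heat_subsolution {ε : ℝ} (hε : 0 < ε)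
    (hbdd : ∀ x t, 0 ≤ t → z x t ≤ M)
    (hcont : ContinuousOn (fun p : E × ℝ => z p.1 p.2) {p | 0 ≤ p.2})
    (hreg : ∀ t, 0 < t → ContDiff ℝ 2 (z · t))
    (hderiv : ∀ x t, 0 < t → HasDerivAt (z x ·) (zt x t) t)
    (hsub : ∀ x t, 0 < t → 0 < z x t → zt x t ≤ Δ (z · t) x + L * z x t)
    (hinit : ∀ x, z x 0 ≤ 0) (x : E) {t : ℝ} (ht : 0 ≤ t) :
    exp (-L * t) * z x t ≤ ε * (‖x‖ ^ 2 + (2 * Module.finrank ℝ E + 1) * t) := by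
  obtain ⟨⟨x₀, t₀⟩, ⟨ht₀, ht₀t⟩, hmax⟩ := exists_isMaxOn_penalized (L := L) hε hbdd hcont ht
  set d : ℝ := (Module.finrank ℝ E : ℝ)
  set Ψ : E × ℝ → ℝ := fun p => exp (-L * p.2) * z p.1 p.2 - ε * (‖p.1‖ ^ 2 + (2 * d + 1) * p.2)
  by_contra! hpos
  replace hpos : 0 < Ψ (x, t) := sub_pos.2 hpos
  have hΨ₀ : 0 < Ψ (x₀, t₀) := hpos.trans_le (hmax ⟨ht, le_rfl⟩)
  have hexp : exp (-L * t₀) * exp (L * t₀) = 1 := by rw [← exp_add]; simp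
  have hz₀ : 0 < z x₀ t₀ := by
    have : 0 ≤ ε * (‖x₀‖ ^ 2 + (2 * d + 1) * t₀) := by positivity
    exact pos_of_mul_pos_right (a := exp (-L * t₀)) (by simp only [Ψ] at hΨ₀; linarith)
      (exp_pos _).le
  have ht₀pos : 0 < t₀ := ht₀.lt_of_ne (by rintro rfl; exact (hinit x₀).not_gt hz₀)
  have hspace : Δ (z · t₀) x₀ ≤ 2 * d * (ε * exp (L * t₀)) := by
    refine laplacian_le_of_isLocalMax_sub_norm_sq (hreg t₀ ht₀pos)
      (Eventually.of_forall fun y => ?_)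
    have h := hmax (show (y, t₀) ∈ Prod.snd ⁻¹' Icc 0 t from ⟨ht₀, ht₀t⟩)
    simp only [Ψ] at h
    dsimp only
    nlinarith [mul_le_mul_of_nonneg_left h (exp_pos (L * t₀)).le, congrArg (· * z y t₀) hexp,
      congrArg (· * z x₀ t₀) hexp]
  have htime : 0 ≤ exp (-L * t₀) * (zt x₀ t₀ - L * z x₀ t₀) - ε * (2 * d + 1) := by
    refine IsMaxOn.hasDerivAt_nonneg_of_Icc (g := fun s => Ψ (x₀, s)) (fun s hs => hmax hs) ?_
      ht₀pos ht₀t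
    have hexp' : HasDerivAt (fun s => exp (-L * s)) (exp (-L * t₀) * -L) t₀ := by
      simpa using ((hasDerivAt_id t₀).const_mul (-L)).exp
    have hpenalty :
        HasDerivAt (fun s => ε * (‖x₀‖ ^ 2 + (2 * d + 1) * s)) (ε * (2 * d + 1)) t₀ := by
      simpa using (((hasDerivAt_id t₀).const_mul (2 * d + 1)).const_add (‖x₀‖ ^ 2)).const_mul ε
    exact ((hexp'.mul (hderiv x₀ t₀ ht₀pos)).sub hpenalty).congr_deriv (by ring)
  have hcombined : zt x₀ t₀ - L * z x₀ t₀ ≤ 2 * d * (ε * exp (L * t₀)) := by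
    linarith [hsub x₀ t₀ ht₀pos hz₀]
  nlinarith [mul_le_mul_of_nonneg_left hcombined (exp_pos (-L * t₀)).le,
    congrArg (· * (2 * d * ε)) hexp]

theorem nonpos_of_heat_subsolution (hbdd : ∀ x t, 0 ≤ t → z x t ≤ M)
    (hcont : ContinuousOn (fun p : E × ℝ => z p.1 p.2) {p | 0 ≤ p.2})
    (hreg : ∀ t, 0 < t → ContDiff ℝ 2 (z · t))
    (hderiv : ∀ x t, 0 < t → HasDerivAt (z x ·) (zt x t) t)
    (hsub : ∀ x t, 0 < t → 0 < z x t → zt x t ≤ Δ (z · t) x + L * z x t)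
    (hinit : ∀ x, z x 0 ≤ 0) (x : E) {t : ℝ} (ht : 0 ≤ t) : z x t ≤ 0 := by
  set P := ‖x‖ ^ 2 + (2 * Module.finrank ℝ E + 1) * t
  have hP : 0 ≤ P := by positivity
  have hweighted : exp (-L * t) * z x t ≤ 0 := by
    refine le_of_forall_pos_le_add fun δ hδ => ?_
    have := exp_mul_le_penalty_of_heat_subsolution (ε := δ / (P + 1)) (by positivity) hbdd hcont
      hreg hderiv hsub hinit x ht
    calc exp (-L * t) * z x t ≤ δ / (P + 1) * P := this
      _ ≤ 0 + δ := by rw [zero_add, div_mul_eq_mul_div, div_le_iff₀ (by positivity)]; nlinarith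
  exact nonpos_of_mul_nonpos_right hweighted (exp_pos _)

end MaximumPrinciple

noncomputable def reaction (p q s : ℝ) : ℝ := |s| ^ (p - 1) * s - |s| ^ (q - 1) * s

section Reaction

variable {p q : ℝ}

theorem reaction_neg (s : ℝ) : reaction p q (-s) = -reaction p q s := by
  simp only [reaction, abs_neg]; ring

theorem reaction_of_nonneg (hp : 0 < p) (hq : 0 < q) {s : ℝ} (hs : 0 ≤ s) :
    reaction p q s = s ^ p - s ^ q := by
  rcases hs.eq_or_lt with rfl | hs
  · simp [reaction, zero_rpow hp.ne', zero_rpow hq.ne']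
  · simp only [reaction, abs_of_pos hs, ← rpow_add_one hs.ne', sub_add_cancel]

theorem reaction_sub_le (hp : 1 ≤ p) (hq : 0 < q) {H U B : ℝ} (hH : 0 ≤ H) (hHU : H ≤ U)
    (hUB : U ≤ B) : reaction p q U - reaction p q H ≤ p * B ^ (p - 1) * (U - H) := by
  rw [reaction_of_nonneg (by linarith) hq (hH.trans hHU), reaction_of_nonneg (by linarith) hq hH]
  have hq_mono : H ^ q ≤ U ^ q := rpow_le_rpow hH hHU hq.le
  have hp_mono : p * U ^ (p - 1) ≤ p * B ^ (p - 1) :=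
    mul_le_mul_of_nonneg_left (rpow_le_rpow (hH.trans hHU) hUB (by linarith)) (by linarith)
  suffices U ^ p - H ^ p ≤ p * U ^ (p - 1) * (U - H) by nlinarith
  rcases hHU.eq_or_lt with rfl | hlt
  · simp
  have := (convexOn_rpow hp).slope_le_of_hasDerivAt hH (hH.trans hHU) hlt
    (hasDerivAt_rpow_const (Or.inr hp))
  rwa [slope_def_field, div_le_iff₀ (by linarith)] at this

theorem reaction_le_neg_rpow (hq : 0 < q) (hqp : q < p) {A H : ℝ} (hH : 0 ≤ H) (hHA : H ≤ A) :
    reaction p q H ≤ -(1 - A ^ (p - q)) * H ^ q := by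
  have hsplit : H ^ p = H ^ q * H ^ (p - q) := by
    rw [← rpow_add' hH (by linarith)]; ring_nf
  rw [reaction_of_nonneg (by linarith) hq hH, hsplit]
  nlinarith [rpow_le_rpow hH hHA (by linarith : 0 ≤ p - q), rpow_nonneg hH q]

end Reaction

theorem hasDerivAt_max_zero_rpow {m : ℝ} (hm : 1 < m) (y : ℝ) :
    HasDerivAt (fun y => max 0 y ^ m) (m * max 0 y ^ (m - 1)) y := by
  have hpow (y : ℝ) : HasDerivAt (· ^ m) (m * y ^ (m - 1)) y :=
    hasDerivAt_rpow_const (Or.inr hm.le)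
  rcases lt_trichotomy y 0 with hy | rfl | hy
  · have hzero : (fun y => max 0 y ^ m) =ᶠ[𝓝 y] fun _ => 0 := by
      filter_upwards [eventually_lt_nhds hy] with z hz
      rw [max_eq_left hz.le, zero_rpow (by linarith)]
    rw [max_eq_left hy.le, zero_rpow (by linarith), mul_zero]
    exact (hasDerivAt_const y 0).congr_of_eventuallyEq hzero
  · have hleft : HasDerivWithinAt (fun y : ℝ => max 0 y ^ m) 0 (Iic 0) 0 :=
      (hasDerivWithinAt_const (0 : ℝ) (Iic 0) (0 : ℝ)).congr (fun z hz => by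
        rw [max_eq_left hz, zero_rpow (by linarith)]) (by simp [zero_rpow (by linarith : m ≠ 0)])
    have hright : HasDerivWithinAt (fun y : ℝ => max 0 y ^ m) 0 (Ici 0) 0 := by
      refine ((hpow 0).hasDerivWithinAt.congr (fun z hz => by rw [max_eq_right hz])
        (by simp)).congr_deriv ?_
      simp [zero_rpow (by linarith : m - 1 ≠ 0)]
    simpa [zero_rpow (by linarith : m - 1 ≠ 0), Iic_union_Ici] using hleft.union hright
  · have hid : (fun y => max 0 y ^ m) =ᶠ[𝓝 y] (· ^ m) := by
      filter_upwards [eventually_gt_nhds hy] with z hz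
      rw [max_eq_right hz.le]
    rw [max_eq_right hy.le]
    exact (hpow y).congr_of_eventuallyEq hid

noncomputable def extinctionProfile (q A c t : ℝ) : ℝ :=
  max 0 (A ^ (1 - q) - (1 - q) * c * t) ^ (1 - q)⁻¹

section ExtinctionProfile

variable {q A c : ℝ}

theorem extinctionProfile_nonneg (t : ℝ) : 0 ≤ extinctionProfile q A c t :=
  rpow_nonneg (le_max_left _ _) _

theorem extinctionProfile_zero (hq : q < 1) (hA : 0 ≤ A) : extinctionProfile q A c 0 = A := by
  rw [extinctionProfile, mul_zero, sub_zero, max_eq_right (rpow_nonneg hA _),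
    rpow_rpow_inv hA (by linarith)]

theorem extinctionProfile_le (hq : q < 1) (hA : 0 ≤ A) (hc : 0 ≤ c) {t : ℝ} (ht : 0 ≤ t) :
    extinctionProfile q A c t ≤ A := by
  have hbase : max 0 (A ^ (1 - q) - (1 - q) * c * t) ≤ A ^ (1 - q) :=
    max_le (rpow_nonneg hA _) (by nlinarith [mul_nonneg (mul_nonneg (sub_nonneg.2 hq.le) hc) ht])
  calc extinctionProfile q A c t ≤ (A ^ (1 - q)) ^ (1 - q)⁻¹ :=
        rpow_le_rpow (le_max_left _ _) hbase (inv_nonneg.2 (by linarith))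
    _ = A := rpow_rpow_inv hA (by linarith)

theorem extinctionProfile_eq_zero (hq : q < 1) (hc : 0 < c) {t : ℝ}
    (ht : A ^ (1 - q) / ((1 - q) * c) ≤ t) : extinctionProfile q A c t = 0 := by
  rw [div_le_iff₀ (mul_pos (by linarith) hc)] at ht
  rw [extinctionProfile, max_eq_left (by linarith), zero_rpow (inv_ne_zero (by linarith))]

theorem hasDerivAt_extinctionProfile (hq0 : 0 < q) (hq1 : q < 1) (t : ℝ) :
    HasDerivAt (extinctionProfile q A c) (-c * extinctionProfile q A c t ^ q) t := by
  set m := (1 - q)⁻¹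
  have hm : 1 < m := one_lt_inv₀ (by linarith) |>.2 (by linarith)
  have hinner : HasDerivAt (fun t => A ^ (1 - q) - (1 - q) * c * t) (-((1 - q) * c)) t := by
    simpa using ((hasDerivAt_id t).const_mul ((1 - q) * c)).const_sub (A ^ (1 - q))
  refine ((hasDerivAt_max_zero_rpow hm _).comp t hinner).congr_deriv ?_
  have hm1 : m * (1 - q) = 1 := inv_mul_cancel₀ (by linarith)
  rw [extinctionProfile, ← rpow_mul (le_max_left _ _),
    show m * q = m - 1 by linear_combination -hm1]
  linear_combination (-c * max 0 (A ^ (1 - q) - (1 - q) * c * t) ^ (m - 1)) * hm1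

end ExtinctionProfile

theorem le_extinctionProfile {v : E → ℝ → ℝ} {p q A M : ℝ} (hp : 1 < p) (hq0 : 0 < q)
    (hq1 : q < 1) (hA0 : 0 ≤ A) (hA1 : A ≤ 1) (hbdd : ∀ x t, 0 ≤ t → v x t ≤ M)
    (hcont : ContinuousOn (fun pt : E × ℝ => v pt.1 pt.2) {pt | 0 ≤ pt.2})
    (hreg : ∀ t, 0 < t → ContDiff ℝ 2 (v · t))
    (hpde : ∀ x t, 0 < t → HasDerivAt (v x ·) (Δ (v · t) x + reaction p q (v x t)) t)
    (hinit : ∀ x, v x 0 ≤ A) (x : E) {t : ℝ} (ht : 0 ≤ t) :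
    v x t ≤ extinctionProfile q A (1 - A ^ (p - q)) t := by
  set c := 1 - A ^ (p - q)
  set h := extinctionProfile q A c
  have hc : 0 ≤ c := sub_nonneg.2 (rpow_le_one hA0 hA1 (by linarith))
  have hh (t : ℝ) : HasDerivAt h (-c * h t ^ q) t := hasDerivAt_extinctionProfile hq0 hq1 t
  have hh_cont : Continuous h := continuous_iff_continuousAt.2 fun t => (hh t).continuousAt
  have hlap (t : ℝ) (ht : 0 < t) (x : E) : Δ (fun y => v y t - h t) x = Δ (v · t) x := by
    rw [show (fun y => v y t - h t) = (v · t) - fun _ => h t from rfl,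
      (hreg t ht).contDiffAt.laplacian_sub contDiffAt_const, InnerProductSpace.laplacian_const]
    simp
  have hsub (x : E) (t : ℝ) (ht : 0 < t) (hpos : 0 < v x t - h t) :
      Δ (v · t) x + reaction p q (v x t) + c * h t ^ q
        ≤ Δ (fun y => v y t - h t) x + p * max M 0 ^ (p - 1) * (v x t - h t) := by
    have hh0 : 0 ≤ h t := extinctionProfile_nonneg t
    have hlip := reaction_sub_le hp.le hq0 hh0 (by linarith)
      ((hbdd x t ht.le).trans (le_max_left M 0))
    have hsuper := reaction_le_neg_rpow hq0 (hq1.trans hp) hh0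
      (extinctionProfile_le hq1 hA0 hc ht.le)
    rw [hlap t ht x]
    linarith
  have := nonpos_of_heat_subsolution (z := fun x t => v x t - h t) (M := M)
    (fun x t ht => by linarith [hbdd x t ht, extinctionProfile_nonneg (q := q) (A := A) (c := c) t])
    (hcont.sub (hh_cont.comp continuous_snd).continuousOn)
    (fun t ht => (hreg t ht).sub contDiff_const)
    (fun x t ht => ((hpde x t ht).sub (hh t)).congr_deriv (by ring)) hsub
    (fun x => by simp [h, extinctionProfile_zero hq1 hA0, hinit x]) x ht
  linarith

theorem finite_time_extinction_general (n : ℕ) (p q A : ℝ)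
    (hp : 1 < p) (hq0 : 0 < q) (hq1 : q < 1) (hA0 : 0 < A) (hA1 : A < 1)
    (u : EuclideanSpace ℝ (Fin n) → ℝ → ℝ)
    (hbdd : ∃ M : ℝ, ∀ x, ∀ t : ℝ, 0 ≤ t → |u x t| ≤ M)
    (hcont : ContinuousOn (fun pt : EuclideanSpace ℝ (Fin n) × ℝ => u pt.1 pt.2)
      {pt | 0 ≤ pt.2})
    (hreg : ∀ t : ℝ, 0 < t → ContDiff ℝ 2 (fun x => u x t))
    (hpde : ∀ x, ∀ t : ℝ, 0 < t →
      HasDerivAt (fun s => u x s)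
        (laplacian (fun y => u y t) x + |u x t| ^ (p - 1) * u x t
          - |u x t| ^ (q - 1) * u x t) t)
    (hinit : ∀ x, |u x 0| ≤ A) :
    ∃ T : ℝ, 0 < T ∧ ∀ x, ∀ t : ℝ, T ≤ t → u x t = 0 := by
  obtain ⟨M, hM⟩ := hbdd
  set c := 1 - A ^ (p - q)
  have hc : 0 < c := sub_pos.2 (rpow_lt_one hA0.le hA1 (by linarith))
  have hpde' (x) (t : ℝ) (ht : 0 < t) :
      HasDerivAt (u x ·) (Δ (u · t) x + reaction p q (u x t)) t := by
    rw [← laplacian_eq_innerProductSpace_laplacian (hreg t ht), reaction, ← add_sub_assoc]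
    exact hpde x t ht
  have hupper := le_extinctionProfile hp hq0 hq1 hA0.le hA1.le
    (fun x t ht => (le_abs_self _).trans (hM x t ht)) hcont hreg hpde'
    (fun x => (abs_le.1 (hinit x)).2)
  have hlower := le_extinctionProfile (v := fun x t => -u x t) hp hq0 hq1 hA0.le hA1.le
    (fun x t ht => (neg_le_abs _).trans (hM x t ht)) hcont.neg (fun t ht => (hreg t ht).neg)
    (fun x t ht => by
      rw [show (fun y => -u y t) = -(u · t) from rfl, InnerProductSpace.laplacian_neg, reaction_neg]
      exact (hpde' x t ht).neg.congr_deriv (by rw [Pi.neg_apply]; ring))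
    (fun x => by linarith [(abs_le.1 (hinit x)).1])
  have h1q : 0 < 1 - q := by linarith
  have hT : 0 < A ^ (1 - q) / ((1 - q) * c) := by positivity
  refine ⟨_, hT, fun x t hTt => ?_⟩
  have hzero := extinctionProfile_eq_zero (A := A) hq1 hc hTt
  linarith [hupper x (hT.le.trans hTt), hlower x (hT.le.trans hTt)]

/-- Finite time extinction. Let `n ≥ 1`, `p > 1`, `q ∈ (0,1)`, `A ∈ (0,1)`.
If `u` is a bounded continuous function on `ℝⁿ × [0,∞)`, is `C^{2,1}` on `ℝⁿ × (0,∞)`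
(for each `t > 0` the map `x ↦ u(x,t)` is `C²`, the second spatial derivatives are
continuous in `(x,t)`, and the time derivative exists and is given by the equation),
satisfies `∂_t u = Δu + |u|^{p−1}u − |u|^{q−1}u` on `ℝⁿ × (0,∞)` and `|u(·,0)| ≤ A`,
then there is `T > 0` with `u(x,t) = 0` for all `x` and all `t ≥ T`. -/
theorem finite_time_extinction (n : ℕ) (hn : 1 ≤ n) (p q A : ℝ)
    (hp : 1 < p) (hq0 : 0 < q) (hq1 : q < 1) (hA0 : 0 < A) (hA1 : A < 1)
    (u : EuclideanSpace ℝ (Fin n) → ℝ → ℝ)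
    (hbdd : ∃ M : ℝ, ∀ x, ∀ t : ℝ, 0 ≤ t → |u x t| ≤ M)
    (hcont : ContinuousOn (fun pt : EuclideanSpace ℝ (Fin n) × ℝ => u pt.1 pt.2)
      {pt | 0 ≤ pt.2})
    (hreg : ∀ t : ℝ, 0 < t → ContDiff ℝ 2 (fun x => u x t))
    (hreg' : ContinuousOn (fun pt : EuclideanSpace ℝ (Fin n) × ℝ =>
      laplacian (fun y => u y pt.2) pt.1) {pt | 0 < pt.2})
    (hpde : ∀ x, ∀ t : ℝ, 0 < t →
      HasDerivAt (fun s => u x s)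
        (laplacian (fun y => u y t) x + |u x t| ^ (p - 1) * u x t
          - |u x t| ^ (q - 1) * u x t) t)
    (hinit : ∀ x, |u x 0| ≤ A) :
    ∃ T : ℝ, 0 < T ∧ ∀ x, ∀ t : ℝ, T ≤ t → u x t = 0 :=
  finite_time_extinction_general n p q A hp hq0 hq1 hA0 hA1 u hbdd hcont hreg hpde hinit
end
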